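/- arXiv:1910.04555 — 4 statements merged into one kernel-verified Lean document; each statement's English description precedes it below -/
import Mathlib

section
/- Let A and B be m × n complex matrices and let A ∘ B denote their Hadamard (entrywise) product. Then the spectral norm (operator 2-norm) satisfies ‖A ∘ B‖ ≤ (max over columns j of the Euclidean norm of the j-th column of A) · (max over rows i of the Euclidean norm of the i-th row of B). -/
open scoped Matrix

/-- The spectral norm (operator 2-norm) of a matrix over `𝕜`. -/
noncomputable def specNorm {𝕜 : Type*} [RCLike 𝕜] {m n : Type*} [Fintype m] [Fintype n]
    [DecidableEq n] (A : Matrix m n 𝕜) : ℝ :=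
  ‖LinearMap.toContinuousLinearMap (Matrix.toEuclideanLin A)‖

/-- Mathias' bound: the spectral norm of a Hadamard (entrywise) product `A ⊙ B` is at most
the maximal Euclidean column norm of `A` times the maximal Euclidean row norm of `B`. -/
theorem specNorm_hadamard_le
    {m n : Type*} [Fintype m] [Fintype n] [DecidableEq m] [DecidableEq n]
    (A B : Matrix m n ℂ) :
    specNorm (A ⊙ B) ≤
      (⨆ j : n, Real.sqrt (∑ i : m, ‖A i j‖ ^ 2)) *
      (⨆ i : m, Real.sqrt (∑ j : n, ‖B i j‖ ^ 2)) := by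
  set α := ⨆ j : n, Real.sqrt (∑ i : m, ‖A i j‖ ^ 2) with hαdef
  set β := ⨆ i : m, Real.sqrt (∑ j : n, ‖B i j‖ ^ 2) with hβdef
  have hα0 : 0 ≤ α := Real.iSup_nonneg fun j => Real.sqrt_nonneg _
  have hβ0 : 0 ≤ β := Real.iSup_nonneg fun i => Real.sqrt_nonneg _
  have hα : ∀ j : n, ∑ i : m, ‖A i j‖ ^ 2 ≤ α ^ 2 := by
    intro j
    have h1 : Real.sqrt (∑ i : m, ‖A i j‖ ^ 2) ≤ ⨆ j : n, Real.sqrt (∑ i : m, ‖A i j‖ ^ 2) :=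
      le_ciSup (f := fun j : n => Real.sqrt (∑ i : m, ‖A i j‖ ^ 2)) (Set.Finite.bddAbove (Set.finite_range _)) j
    rw [hαdef]
    calc ∑ i : m, ‖A i j‖ ^ 2 = Real.sqrt (∑ i : m, ‖A i j‖ ^ 2) ^ 2 := by
          rw [Real.sq_sqrt (Finset.sum_nonneg fun i _ => sq_nonneg _)]
      _ ≤ α ^ 2 := by
          apply pow_le_pow_left₀ (Real.sqrt_nonneg _) h1
  have hβ : ∀ i : m, ∑ j : n, ‖B i j‖ ^ 2 ≤ β ^ 2 := by
    intro i
    have h1 : Real.sqrt (∑ j : n, ‖B i j‖ ^ 2) ≤ ⨆ i : m, Real.sqrt (∑ j : n, ‖B i j‖ ^ 2) :=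
      le_ciSup (f := fun i : m => Real.sqrt (∑ j : n, ‖B i j‖ ^ 2)) (Set.Finite.bddAbove (Set.finite_range _)) i
    rw [hβdef]
    calc ∑ j : n, ‖B i j‖ ^ 2 = Real.sqrt (∑ j : n, ‖B i j‖ ^ 2) ^ 2 := by
          rw [Real.sq_sqrt (Finset.sum_nonneg fun j _ => sq_nonneg _)]
      _ ≤ β ^ 2 := by
          apply pow_le_pow_left₀ (Real.sqrt_nonneg _) h1
  apply ContinuousLinearMap.opNorm_le_bound _ (mul_nonneg hα0 hβ0)
  intro y
  have hnorm : ‖LinearMap.toContinuousLinearMap (Matrix.toEuclideanLin (A ⊙ B)) y‖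
      = Real.sqrt (∑ i : m, ‖∑ j : n, (A i j * B i j) * y j‖ ^ 2) := by
    rw [EuclideanSpace.norm_eq]
    congr 1
  have hy : ‖y‖ ^ 2 = ∑ j : n, ‖y j‖ ^ 2 := by
    rw [EuclideanSpace.norm_eq, Real.sq_sqrt (Finset.sum_nonneg fun j _ => sq_nonneg _)]
  rw [hnorm]
  have key : ∑ i : m, ‖∑ j : n, (A i j * B i j) * y j‖ ^ 2 ≤ (α * β * ‖y‖) ^ 2 := by
    have row : ∀ i : m, ‖∑ j : n, (A i j * B i j) * y j‖ ^ 2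
        ≤ (∑ j : n, ‖B i j‖ ^ 2) * (∑ j : n, ‖A i j‖ ^ 2 * ‖y j‖ ^ 2) := by
      intro i
      have h1 : ‖∑ j : n, (A i j * B i j) * y j‖ ≤ ∑ j : n, ‖B i j‖ * (‖A i j‖ * ‖y j‖) := by
        refine (norm_sum_le _ _).trans (le_of_eq ?_)
        refine Finset.sum_congr rfl fun j _ => ?_
        rw [norm_mul, norm_mul]; ring
      have h2 : (∑ j : n, ‖B i j‖ * (‖A i j‖ * ‖y j‖)) ^ 2
          ≤ (∑ j : n, ‖B i j‖ ^ 2) * (∑ j : n, (‖A i j‖ * ‖y j‖) ^ 2) :=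
        Finset.sum_mul_sq_le_sq_mul_sq _ _ _
      calc ‖∑ j : n, (A i j * B i j) * y j‖ ^ 2
          ≤ (∑ j : n, ‖B i j‖ * (‖A i j‖ * ‖y j‖)) ^ 2 :=
            pow_le_pow_left₀ (norm_nonneg _) h1 2
        _ ≤ (∑ j : n, ‖B i j‖ ^ 2) * (∑ j : n, (‖A i j‖ * ‖y j‖) ^ 2) := h2
        _ = (∑ j : n, ‖B i j‖ ^ 2) * (∑ j : n, ‖A i j‖ ^ 2 * ‖y j‖ ^ 2) := by
            congr 1; exact Finset.sum_congr rfl fun j _ => by ring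
    calc ∑ i : m, ‖∑ j : n, (A i j * B i j) * y j‖ ^ 2
        ≤ ∑ i : m, (∑ j : n, ‖B i j‖ ^ 2) * (∑ j : n, ‖A i j‖ ^ 2 * ‖y j‖ ^ 2) :=
          Finset.sum_le_sum fun i _ => row i
      _ ≤ ∑ i : m, β ^ 2 * (∑ j : n, ‖A i j‖ ^ 2 * ‖y j‖ ^ 2) := by
          refine Finset.sum_le_sum fun i _ => ?_
          exact mul_le_mul_of_nonneg_right (hβ i)
            (Finset.sum_nonneg fun j _ => mul_nonneg (sq_nonneg _) (sq_nonneg _))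
      _ = β ^ 2 * ∑ j : n, (∑ i : m, ‖A i j‖ ^ 2) * ‖y j‖ ^ 2 := by
          rw [← Finset.mul_sum, Finset.sum_comm]
          congr 1
          exact Finset.sum_congr rfl fun j _ => by rw [Finset.sum_mul]
      _ ≤ β ^ 2 * ∑ j : n, α ^ 2 * ‖y j‖ ^ 2 := by
          refine mul_le_mul_of_nonneg_left (Finset.sum_le_sum fun j _ => ?_) (sq_nonneg _)
          exact mul_le_mul_of_nonneg_right (hα j) (sq_nonneg _)
      _ = (α * β * ‖y‖) ^ 2 := by
          rw [← Finset.mul_sum, ← hy]; ring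
  calc Real.sqrt (∑ i : m, ‖∑ j : n, (A i j * B i j) * y j‖ ^ 2)
      ≤ Real.sqrt ((α * β * ‖y‖) ^ 2) := Real.sqrt_le_sqrt key
    _ = α * β * ‖y‖ := Real.sqrt_sq (by positivity)
end

section
/- With the parallel oracle model and adversary matrix setup below, let δ : S → ℝ be a unit vector with nonnegative entries, and for each x ∈ S let φ_x ∈ H be a unit vector. Then | Σ_{x,y ∈ S} Γ_{xy} δ_x δ_y ( ⟨φ_x, φ_y⟩ − ⟨O_x^{⊗p} φ_x, O_y^{⊗p} φ_y⟩ ) | ≤ 2 · max over tuples (i₁,…,i_p) ∈ (Fin N)^p of λ(Γ^{i₁⋯i_p}). In words: a single round of p parallel oracle queries can change the adversary progress measure by at most twice the largest spectral norm of the zeroed-out matrices Γ^{i₁⋯i_p}. -/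
/-- Basis index for the algorithm's Hilbert space: `p` query registers over `Fin N`,
`p` result bits, and a workspace register `Fin d`. -/
abbrev QIdx (N p d : ℕ) := (Fin p → Fin N) × (Fin p → Bool) × Fin d

/-- The `p`-parallel oracle unitary for the oracle string `x : Fin N → Bool`, as a matrix:
`|i₁,…,i_p; b₁,…,b_p; w⟩ ↦ |i₁,…,i_p; b₁ ⊕ x_{i₁}, …, b_p ⊕ x_{i_p}; w⟩`. -/
def oracleMatrix {N p d : ℕ} (x : Fin N → Bool) : Matrix (QIdx N p d) (QIdx N p d) ℂ :=
  Matrix.of fun k k' =>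
    if k.1 = k'.1 ∧ k.2.2 = k'.2.2 ∧ (∀ j, k.2.1 j = xor (k'.2.1 j) (x (k'.1 j)))
    then 1 else 0

/-- The adversary matrix `Γ^{i₁⋯i_p}`: entries of `Γ` are kept where the two oracles
disagree on some queried position `i_j`, and zeroed out elsewhere. -/
def zeroedOut {S : Type*} {N p : ℕ} (x : S → Fin N → Bool) (Γ : Matrix S S ℝ)
    (i : Fin p → Fin N) : Matrix S S ℝ :=
  Matrix.of fun a b => if ∃ j, x a (i j) ≠ x b (i j) then Γ a b else 0

/-!
Split the Hilbert space into blocks according to the query register `i = (i₁,…,i_p)`.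
The oracle `O_x` permutes the basis inside each block, and on block `i` the oracles `O_x`
and `O_y` coincide as soon as `x` and `y` agree on `i₁,…,i_p`; those pairs therefore
contribute nothing on block `i`, so the contribution of block `i` to the progress change is a
difference of two Gram sums weighted by `Γ^{i}` alone. Each Gram sum is bounded by
`λ(Γ^{i}) · Σ_x δ_x² ‖φ_x|_i‖²` (the real symmetric `Γ^{i}` is applied coordinatewise to the
real and imaginary parts), `O_x` preserves these block weights, and the weights sum to
`Σ_x δ_x² ‖φ_x‖² = 1`.
-/

open Finset Matrix ComplexConjugate

section Gram

variable {S : Type*} [Fintype S]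

lemma abs_dotProduct_mulVec_self_le_specNorm [DecidableEq S] (M : Matrix S S ℝ) (r : S → ℝ) :
    |r ⬝ᵥ M *ᵥ r| ≤ specNorm M * (r ⬝ᵥ r) := by
  set A := LinearMap.toContinuousLinearMap (toEuclideanLin M)
  set v : EuclideanSpace ℝ S := WithLp.toLp 2 r
  have hform : r ⬝ᵥ M *ᵥ r = inner ℝ v (A v) := by
    rw [EuclideanSpace.inner_eq_star_dotProduct, dotProduct_comm]; rfl
  have hnorm : r ⬝ᵥ r = ‖v‖ ^ 2 := by
    rw [← real_inner_self_eq_norm_sq, EuclideanSpace.inner_eq_star_dotProduct]; rfl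
  calc |r ⬝ᵥ M *ᵥ r| = |inner ℝ v (A v)| := by rw [hform]
    _ ≤ ‖v‖ * ‖A v‖ := abs_real_inner_le_norm v (A v)
    _ ≤ ‖v‖ * (‖A‖ * ‖v‖) := by gcongr; exact A.le_opNorm v
    _ = specNorm M * (r ⬝ᵥ r) := by rw [hnorm]; unfold specNorm; ring

lemma dotProduct_mulVec_comm_of_isSymm {M : Matrix S S ℝ} (hM : M.IsSymm) (r s : S → ℝ) :
    r ⬝ᵥ M *ᵥ s = s ⬝ᵥ M *ᵥ r := by
  rw [dotProduct_mulVec, ← hM.eq, vecMul_transpose, hM.eq, dotProduct_comm]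

lemma norm_sum_mul_conj_mul_le_specNorm [DecidableEq S] {M : Matrix S S ℝ} (hM : M.IsSymm)
    (w : S → ℂ) :
    ‖∑ a, ∑ b, (M a b : ℂ) * (conj (w a) * w b)‖ ≤ specNorm M * ∑ a, ‖w a‖ ^ 2 := by
  set r : S → ℝ := fun a => (w a).re
  set s : S → ℝ := fun a => (w a).im
  have hbil : ∀ u v : S → ℝ, u ⬝ᵥ M *ᵥ v = ∑ a, ∑ b, M a b * u a * v b := fun u v => by
    simp only [dotProduct, mulVec, mul_sum]
    exact sum_congr rfl fun a _ => sum_congr rfl fun b _ => by ring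
  have hterm : ∀ a b, (M a b : ℂ) * (conj (w a) * w b) =
      ((M a b * r a * r b + M a b * s a * s b : ℝ) : ℂ) +
        ((M a b * r a * s b - M a b * s a * r b : ℝ) : ℂ) * Complex.I := fun a b => by
    apply Complex.ext <;> simp [Complex.mul_re, Complex.mul_im, r, s] <;> ring
  have hform : ∑ a, ∑ b, (M a b : ℂ) * (conj (w a) * w b) =
      ((r ⬝ᵥ M *ᵥ r + s ⬝ᵥ M *ᵥ s : ℝ) : ℂ) +
        ((r ⬝ᵥ M *ᵥ s - s ⬝ᵥ M *ᵥ r : ℝ) : ℂ) * Complex.I := by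
    simp only [hbil]
    push_cast [hterm, sum_add_distrib, sum_sub_distrib, sub_mul, sum_mul]
    ring
  rw [hform, dotProduct_mulVec_comm_of_isSymm hM r s, sub_self, Complex.ofReal_zero, zero_mul,
    add_zero, Complex.norm_real, Real.norm_eq_abs]
  calc |r ⬝ᵥ M *ᵥ r + s ⬝ᵥ M *ᵥ s| ≤ |r ⬝ᵥ M *ᵥ r| + |s ⬝ᵥ M *ᵥ s| := abs_add_le _ _
    _ ≤ specNorm M * (r ⬝ᵥ r) + specNorm M * (s ⬝ᵥ s) :=
      add_le_add (abs_dotProduct_mulVec_self_le_specNorm M r)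
        (abs_dotProduct_mulVec_self_le_specNorm M s)
    _ = specNorm M * ∑ a, ‖w a‖ ^ 2 := by
      simp only [← mul_add, dotProduct, ← sum_add_distrib, Complex.sq_norm, Complex.normSq_apply,
        r, s]

def weightedGram {K : Type*} (M : Matrix S S ℝ) (δ : S → ℝ) (f : S → K → ℂ)
    (s : Finset K) : ℂ :=
  ∑ a, ∑ b, ((M a b * δ a * δ b : ℝ) : ℂ) * ∑ k ∈ s, conj (f a k) * f b k

lemma norm_weightedGram_le {K : Type*} [DecidableEq S] {M : Matrix S S ℝ}
    (hM : M.IsSymm) (δ : S → ℝ) (f : S → K → ℂ) (s : Finset K) :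
    ‖weightedGram M δ f s‖ ≤ specNorm M * ∑ a, δ a ^ 2 * ∑ k ∈ s, ‖f a k‖ ^ 2 := by
  have hswap : weightedGram M δ f s =
      ∑ k ∈ s, ∑ a, ∑ b, (M a b : ℂ) * (conj (δ a * f a k) * (δ b * f b k)) := by
    have hterm : ∀ a b k, ((M a b * δ a * δ b : ℝ) : ℂ) * (conj (f a k) * f b k) =
        (M a b : ℂ) * (conj (δ a * f a k) * (δ b * f b k)) := fun a b k => by
      simp only [map_mul, Complex.conj_ofReal]
      push_cast
      ring
    simp only [weightedGram, mul_sum, hterm]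
    conv_rhs => rw [sum_comm]
    exact sum_congr rfl fun a _ => sum_comm
  calc _ = ‖∑ k ∈ s, ∑ a, ∑ b, (M a b : ℂ) * (conj (δ a * f a k) * (δ b * f b k))‖ := by
        rw [hswap]
    _ ≤ ∑ k ∈ s, ‖∑ a, ∑ b, (M a b : ℂ) * (conj (δ a * f a k) * (δ b * f b k))‖ :=
        norm_sum_le _ _
    _ ≤ ∑ k ∈ s, specNorm M * ∑ a, ‖(δ a : ℂ) * f a k‖ ^ 2 :=
        sum_le_sum fun k _ => norm_sum_mul_conj_mul_le_specNorm hM fun a => δ a * f a k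
    _ = specNorm M * ∑ a, δ a ^ 2 * ∑ k ∈ s, ‖f a k‖ ^ 2 := by
        rw [← mul_sum, sum_comm]
        simp only [norm_mul, Complex.norm_real, Real.norm_eq_abs, mul_pow, sq_abs,
          mul_sum]

end Gram

lemma zeroedOut_isSymm {S : Type*} {N p : ℕ} (x : S → Fin N → Bool) {Γ : Matrix S S ℝ}
    (hΓ : Γ.IsSymm) (i : Fin p → Fin N) : (zeroedOut x Γ i).IsSymm := by
  refine IsSymm.ext fun a b => ?_
  simp only [zeroedOut, of_apply, ne_comm, hΓ.apply]

section Oracle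

variable {N p d : ℕ}

def oraclePerm (x : Fin N → Bool) : Equiv.Perm (QIdx N p d) :=
  Function.Involutive.toPerm (fun k => (k.1, fun j => xor (k.2.1 j) (x (k.1 j)), k.2.2))
    fun k => by simp

lemma oraclePerm_apply (x : Fin N → Bool) (k : QIdx N p d) :
    oraclePerm x k = (k.1, fun j => xor (k.2.1 j) (x (k.1 j)), k.2.2) := rfl

lemma oracleMatrix_apply (x : Fin N → Bool) (k k' : QIdx N p d) :
    oracleMatrix x k k' = if oraclePerm x k = k' then 1 else 0 := by
  obtain ⟨i, b, w⟩ := k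
  obtain ⟨i', b', w'⟩ := k'
  simp only [oracleMatrix, of_apply, oraclePerm_apply, Prod.mk.injEq]
  congr 1
  apply propext
  constructor
  · rintro ⟨rfl, rfl, hb⟩
    exact ⟨rfl, funext fun j => by rw [hb j]; simp, rfl⟩
  · rintro ⟨rfl, rfl, rfl⟩
    exact ⟨rfl, rfl, fun j => by simp⟩

lemma toEuclideanCLM_oracleMatrix_apply (x : Fin N → Bool) (φ : EuclideanSpace ℂ (QIdx N p d))
    (k : QIdx N p d) :
    toEuclideanCLM (𝕜 := ℂ) (oracleMatrix x) φ k = φ (oraclePerm x k) := by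
  rw [ofLp_toEuclideanCLM, mulVec, dotProduct]
  simp [oracleMatrix_apply]

lemma oraclePerm_eq_of_agree {x y : Fin N → Bool} {k : QIdx N p d}
    (hxy : ∀ j, x (k.1 j) = y (k.1 j)) : oraclePerm x k = oraclePerm y k := by
  simp only [oraclePerm_apply, hxy]

lemma sum_fiber_oraclePerm {M : Type*} [AddCommMonoid M] (x : Fin N → Bool)
    (i : Fin p → Fin N) (g : QIdx N p d → M) :
    ∑ k with k.1 = i, g (oraclePerm x k) = ∑ k with k.1 = i, g k :=
  sum_equiv (oraclePerm x) (by simp [oraclePerm_apply]) (by simp)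

lemma inner_sub_inner_oracle_eq_sum_fiber (x y : Fin N → Bool)
    (φ ψ : EuclideanSpace ℂ (QIdx N p d)) :
    inner ℂ φ ψ - inner ℂ (toEuclideanCLM (𝕜 := ℂ) (oracleMatrix x) φ)
        (toEuclideanCLM (𝕜 := ℂ) (oracleMatrix y) ψ) =
      ∑ i, (∑ k with k.1 = i, conj (φ k) * ψ k -
        ∑ k with k.1 = i, conj (φ (oraclePerm x k)) * ψ (oraclePerm y k)) := by
  simp only [PiLp.inner_apply, RCLike.inner_apply, toEuclideanCLM_oracleMatrix_apply,
    sum_sub_distrib, sum_fiberwise, mul_comm]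

lemma sum_fiber_oracle_eq_of_agree {x y : Fin N → Bool} {i : Fin p → Fin N}
    (hxy : ∀ j, x (i j) = y (i j)) (φ ψ : QIdx N p d → ℂ) :
    ∑ k with k.1 = i, conj (φ (oraclePerm x k)) * ψ (oraclePerm y k) =
      ∑ k with k.1 = i, conj (φ k) * ψ k := by
  refine (sum_congr rfl fun k hk => ?_).trans
    (sum_fiber_oraclePerm x i fun k => conj (φ k) * ψ k)
  obtain rfl := (mem_filter.mp hk).2
  rw [oraclePerm_eq_of_agree (y := x) fun j => (hxy j).symm]

end Oracle

section Progress

variable {S : Type*} [Fintype S] {N p d : ℕ}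

lemma progress_eq_sum_weightedGram (x : S → Fin N → Bool) (Γ : Matrix S S ℝ) (δ : S → ℝ)
    (φ : S → EuclideanSpace ℂ (QIdx N p d)) :
    ∑ a : S, ∑ b : S, ((Γ a b * δ a * δ b : ℝ) : ℂ) *
        (inner ℂ (φ a) (φ b) -
          inner ℂ (toEuclideanCLM (𝕜 := ℂ) (oracleMatrix (x a)) (φ a))
            (toEuclideanCLM (𝕜 := ℂ) (oracleMatrix (x b)) (φ b))) =
      ∑ i, (weightedGram (zeroedOut x Γ i) δ (fun a k => φ a k) {k | k.1 = i} -
        weightedGram (zeroedOut x Γ i) δ (fun a k => φ a (oraclePerm (x a) k)) {k | k.1 = i}) := by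
  have hpair : ∀ a b, ((Γ a b * δ a * δ b : ℝ) : ℂ) *
      (inner ℂ (φ a) (φ b) -
        inner ℂ (toEuclideanCLM (𝕜 := ℂ) (oracleMatrix (x a)) (φ a))
          (toEuclideanCLM (𝕜 := ℂ) (oracleMatrix (x b)) (φ b))) =
      ∑ i, ((zeroedOut x Γ i a b * δ a * δ b : ℝ) : ℂ) *
        (∑ k with k.1 = i, conj (φ a k) * φ b k -
          ∑ k with k.1 = i, conj (φ a (oraclePerm (x a) k)) * φ b (oraclePerm (x b) k)) := by
    intro a b
    rw [inner_sub_inner_oracle_eq_sum_fiber, mul_sum]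
    refine sum_congr rfl fun i _ => ?_
    by_cases hdiff : ∃ j, x a (i j) ≠ x b (i j)
    · simp only [zeroedOut, of_apply, if_pos hdiff]
    · rw [not_exists_not] at hdiff
      simp only [sum_fiber_oracle_eq_of_agree hdiff, sub_self, mul_zero]
  simp only [hpair, weightedGram, ← sum_sub_distrib, ← mul_sub]
  conv_lhs => enter [2, a]; rw [sum_comm]
  exact sum_comm

lemma norm_weightedGram_sub_oracle_le [DecidableEq S] (x : S → Fin N → Bool) {M : Matrix S S ℝ}
    (hM : M.IsSymm) (δ : S → ℝ) (φ : S → EuclideanSpace ℂ (QIdx N p d)) (i : Fin p → Fin N) :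
    ‖weightedGram M δ (fun a k => φ a k) {k | k.1 = i} -
        weightedGram M δ (fun a k => φ a (oraclePerm (x a) k)) {k | k.1 = i}‖ ≤
      2 * specNorm M * ∑ a, δ a ^ 2 * ∑ k with k.1 = i, ‖φ a k‖ ^ 2 := by
  have hunitary := fun a => sum_fiber_oraclePerm (x a) i fun k => ‖φ a k‖ ^ 2
  calc _ ≤ _ := norm_sub_le _ _
    _ ≤ specNorm M * ∑ a, δ a ^ 2 * ∑ k with k.1 = i, ‖φ a k‖ ^ 2 +
        specNorm M * ∑ a, δ a ^ 2 * ∑ k with k.1 = i, ‖φ a k‖ ^ 2 := by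
      refine add_le_add (norm_weightedGram_le hM δ _ _) ?_
      simpa only [hunitary] using
        norm_weightedGram_le hM δ (fun a k => φ a (oraclePerm (x a) k)) {k | k.1 = i}
    _ = _ := by ring

lemma sum_sum_fiber_norm_sq_eq (δ : S → ℝ) (φ : S → EuclideanSpace ℂ (QIdx N p d)) :
    ∑ i : Fin p → Fin N, ∑ a, δ a ^ 2 * ∑ k with k.1 = i, ‖φ a k‖ ^ 2 =
      ∑ a, δ a ^ 2 * ‖φ a‖ ^ 2 := by
  rw [sum_comm]
  simp only [← mul_sum, sum_fiberwise, EuclideanSpace.norm_sq_eq]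

end Progress

theorem progress_measure_step_bound_general
    {S : Type*} [Fintype S] [DecidableEq S] {N p d : ℕ}
    (x : S → Fin N → Bool)
    (Γ : Matrix S S ℝ) (hsym : Γ.IsSymm)
    (δ : S → ℝ) (hδ : ∑ a, δ a ^ 2 = 1)
    (φ : S → EuclideanSpace ℂ (QIdx N p d)) (hφ : ∀ a, ‖φ a‖ = 1) :
    ‖∑ a : S, ∑ b : S, ((Γ a b * δ a * δ b : ℝ) : ℂ) *
        (inner ℂ (φ a) (φ b) -
          inner ℂ (Matrix.toEuclideanCLM (𝕜 := ℂ) (oracleMatrix (x a)) (φ a))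
                (Matrix.toEuclideanCLM (𝕜 := ℂ) (oracleMatrix (x b)) (φ b)))‖ ≤
      2 * ⨆ i : Fin p → Fin N, specNorm (zeroedOut x Γ i) := by
  set w : (Fin p → Fin N) → ℝ := fun i => ∑ a, δ a ^ 2 * ∑ k with k.1 = i, ‖φ a k‖ ^ 2
  have hw : ∑ i, w i = 1 := by simp only [w, sum_sum_fiber_norm_sq_eq, hφ, one_pow, mul_one, hδ]
  have hle : ∀ i : Fin p → Fin N, specNorm (zeroedOut x Γ i) ≤ ⨆ i, specNorm (zeroedOut x Γ i) :=
    le_ciSup (Set.finite_range _).bddAbove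
  rw [progress_eq_sum_weightedGram]
  calc _ ≤ ∑ i, 2 * specNorm (zeroedOut x Γ i) * w i := (norm_sum_le _ _).trans <|
        sum_le_sum fun i _ =>
          norm_weightedGram_sub_oracle_le x (zeroedOut_isSymm x hsym i) δ φ i
    _ ≤ ∑ i, 2 * (⨆ i, specNorm (zeroedOut x Γ i)) * w i := by
        gcongr with i
        exact hle i
    _ = 2 * ⨆ i : Fin p → Fin N, specNorm (zeroedOut x Γ i) := by rw [← mul_sum, hw, mul_one]

/-- One round of `p` parallel oracle queries changes the adversary progress measure by at
most twice the largest spectral norm of the zeroed-out matrices `Γ^{i₁⋯i_p}`. -/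
theorem progress_measure_step_bound
    {S : Type*} [Fintype S] [DecidableEq S] {N p d : ℕ}
    (x : S → Fin N → Bool)
    (Γ : Matrix S S ℝ) (hsym : Γ.IsSymm) (hnn : ∀ a b, 0 ≤ Γ a b)
    (δ : S → ℝ) (hδnn : ∀ a, 0 ≤ δ a) (hδ : ∑ a, δ a ^ 2 = 1)
    (φ : S → EuclideanSpace ℂ (QIdx N p d)) (hφ : ∀ a, ‖φ a‖ = 1) :
    ‖∑ a : S, ∑ b : S, ((Γ a b * δ a * δ b : ℝ) : ℂ) *
        (inner ℂ (φ a) (φ b) -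
          inner ℂ (Matrix.toEuclideanCLM (𝕜 := ℂ) (oracleMatrix (x a)) (φ a))
                (Matrix.toEuclideanCLM (𝕜 := ℂ) (oracleMatrix (x b)) (φ b)))‖ ≤
      2 * ⨆ i : Fin p → Fin N, specNorm (zeroedOut x Γ i) :=
  progress_measure_step_bound_general x Γ hsym δ hδ φ hφ
end

section
/- (Spectral core of Theorem 2.) Let X and Y be disjoint finite sets of oracles x : Fin N → Bool, let R ⊆ X × Y be a relation, and let Γ be the real symmetric matrix on (X ∪ Y) × (X ∪ Y) with Γ_{xy} = 1 if (x,y) ∈ R or (y,x) ∈ R and Γ_{xy} = 0 otherwise. For each tuple (i₁,…,i_p) ∈ (Fin N)^p, set R^{i₁⋯i_p} = {(x,y) ∈ R : x_{i_j} ≠ y_{i_j} for some j}. Suppose every x ∈ X is related by R to at least h elements of Y, every y ∈ Y is related by R to at least h' elements of X, and for every tuple (i₁,…,i_p) every x ∈ X is related by R^{i₁⋯i_p} to at most ℓ elements and every y ∈ Y to at most ℓ' elements, with h, h', ℓ, ℓ' ≥ 1. Then λ(Γ) / (max over tuples (i₁,…,i_p) of λ(Γ^{i₁⋯i_p})) ≥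 √(h·h' / (ℓ·ℓ')). -/
open Finset Matrix WithLp

section SpectralNorm

variable {m n : Type*} [Fintype m] [Fintype n] [DecidableEq n]

lemma norm_toLp_mulVec_le_specNorm (A : Matrix m n ℝ) (v : n → ℝ) :
    ‖toLp 2 (A *ᵥ v)‖ ≤ specNorm A * ‖toLp 2 v‖ :=
  (LinearMap.toContinuousLinearMap (Matrix.toEuclideanLin A)).le_opNorm (toLp 2 v)

lemma specNorm_le_of_norm_toLp_mulVec_le (A : Matrix m n ℝ) {c : ℝ} (hc : 0 ≤ c)
    (h : ∀ v, ‖toLp 2 (A *ᵥ v)‖ ≤ c * ‖toLp 2 v‖) : specNorm A ≤ c :=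
  ContinuousLinearMap.opNorm_le_bound _ hc fun v => h (ofLp v)

lemma dotProduct_mulVec_le_specNorm (A : Matrix m n ℝ) (u : m → ℝ) (v : n → ℝ) :
    u ⬝ᵥ (A *ᵥ v) ≤ specNorm A * ‖toLp 2 u‖ * ‖toLp 2 v‖ :=
  calc u ⬝ᵥ (A *ᵥ v) = inner ℝ (toLp 2 u) (toLp 2 (A *ᵥ v)) := by
        rw [EuclideanSpace.inner_toLp_toLp, star_trivial, dotProduct_comm]
    _ ≤ ‖toLp 2 u‖ * ‖toLp 2 (A *ᵥ v)‖ := real_inner_le_norm _ _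
    _ ≤ ‖toLp 2 u‖ * (specNorm A * ‖toLp 2 v‖) := by
        gcongr; exact norm_toLp_mulVec_le_specNorm A v
    _ = specNorm A * ‖toLp 2 u‖ * ‖toLp 2 v‖ := by ring

lemma norm_toLp_indicator (S : Finset n) :
    ‖toLp 2 (fun x => if x ∈ S then (1 : ℝ) else 0)‖ = √(#S : ℝ) := by
  rw [EuclideanSpace.norm_eq]
  congr 1
  simp [apply_ite]

lemma sum_sum_le_specNorm_mul_sqrt_card (A : Matrix m n ℝ) (S : Finset m) (T : Finset n) :
    ∑ x ∈ S, ∑ y ∈ T, A x y ≤ specNorm A * √(#S : ℝ) * √(#T : ℝ) := by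
  classical
  have := dotProduct_mulVec_le_specNorm A (fun x => if x ∈ S then 1 else 0)
    (fun y => if y ∈ T then 1 else 0)
  rw [norm_toLp_indicator, norm_toLp_indicator] at this
  simpa [dotProduct, Matrix.mulVec, ite_mul, sum_ite_mem] using this

lemma apply_le_specNorm (A : Matrix m n ℝ) (x : m) (y : n) : A x y ≤ specNorm A := by
  simpa using sum_sum_le_specNorm_mul_sqrt_card A {x} {y}

/-- **Schur test** with the constant weight on the columns. -/
lemma specNorm_le_sqrt_of_sum_mul_le (A : Matrix m n ℝ) (hA : ∀ x y, 0 ≤ A x y)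
    (d : m → ℝ) {C : ℝ} (hd : ∀ x, ∑ y, A x y ≤ d x) (hC : ∀ y, ∑ x, d x * A x y ≤ C) :
    specNorm A ≤ √C := by
  refine specNorm_le_of_norm_toLp_mulVec_le A (Real.sqrt_nonneg C) fun v => ?_
  have row_sq (x : m) : (A *ᵥ v) x ^ 2 ≤ d x * ∑ y, A x y * v y ^ 2 :=
    calc (A *ᵥ v) x ^ 2 ≤ (∑ y, A x y) * ∑ y, A x y * v y ^ 2 :=
          sum_sq_le_sum_mul_sum_of_sq_le_mul _ (fun y _ => hA x y)
            (fun y _ => mul_nonneg (hA x y) (sq_nonneg _)) fun y _ => (by ring : _ = _).le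
      _ ≤ d x * ∑ y, A x y * v y ^ 2 :=
          mul_le_mul_of_nonneg_right (hd x)
            (sum_nonneg fun y _ => mul_nonneg (hA x y) (sq_nonneg _))
  have key : ‖toLp 2 (A *ᵥ v)‖ ^ 2 ≤ C * ‖toLp 2 v‖ ^ 2 := by
    rw [EuclideanSpace.real_norm_sq_eq, EuclideanSpace.real_norm_sq_eq]
    calc ∑ x, (A *ᵥ v) x ^ 2 ≤ ∑ x, d x * ∑ y, A x y * v y ^ 2 := sum_le_sum fun x _ => row_sq x
      _ = ∑ y, (∑ x, d x * A x y) * v y ^ 2 := by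
          simp_rw [mul_sum, sum_mul]
          rw [sum_comm]
          simp only [mul_assoc]
      _ ≤ ∑ y, C * v y ^ 2 := sum_le_sum fun y _ => by gcongr; exact hC y
      _ = C * ∑ y, v y ^ 2 := (mul_sum _ _ _).symm
  rw [← Real.sqrt_sq (norm_nonneg _), ← Real.sqrt_sq (norm_nonneg (toLp 2 v)),
    ← Real.sqrt_mul' _ (sq_nonneg _)]
  exact Real.sqrt_le_sqrt key

lemma specNorm_le_sqrt_mul_of_bipartite (A : Matrix n n ℝ) (hA : ∀ x y, 0 ≤ A x y)
    (hsymm : A.IsSymm) (side : n → Prop) [DecidablePred side]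
    (hbip : ∀ x y, A x y ≠ 0 → (side x ↔ ¬ side y)) {a b : ℝ} (ha : 0 ≤ a) (hb : 0 ≤ b)
    (hrow : ∀ x, ∑ y, A x y ≤ if side x then a else b) :
    specNorm A ≤ √(a * b) := by
  refine specNorm_le_sqrt_of_sum_mul_le A hA _ hrow fun y => ?_
  have hswap (x : n) : (if side x then a else b) * A x y = (if side y then b else a) * A x y := by
    by_cases hxy : A x y = 0
    · simp [hxy]
    · by_cases hy : side y <;> simp [hbip x y hxy, hy]
  calc ∑ x, (if side x then a else b) * A x y
      = (if side y then b else a) * ∑ x, A y x := by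
        simp_rw [hswap, ← mul_sum, hsymm.apply]
    _ ≤ (if side y then b else a) * (if side y then a else b) :=
        mul_le_mul_of_nonneg_left (hrow y) (by split_ifs <;> assumption)
    _ = a * b := by split_ifs <;> ring

lemma sqrt_mul_le_specNorm (A : Matrix m n ℝ) {S : Finset m} {T : Finset n}
    (hS : S.Nonempty) (hT : T.Nonempty) {a b : ℝ} (ha : 0 ≤ a) (hb : 0 ≤ b)
    (hrow : ∀ x ∈ S, a ≤ ∑ y ∈ T, A x y) (hcol : ∀ y ∈ T, b ≤ ∑ x ∈ S, A x y) :
    √(a * b) ≤ specNorm A := by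
  set L := ∑ x ∈ S, ∑ y ∈ T, A x y
  have hSL : #S * a ≤ L := by simpa using card_nsmul_le_sum S _ a hrow
  have hTL : #T * b ≤ L := by
    rw [show L = ∑ y ∈ T, ∑ x ∈ S, A x y from sum_comm]
    simpa using card_nsmul_le_sum T _ b hcol
  have hL : 0 ≤ L := (by positivity : (0 : ℝ) ≤ #S * a).trans hSL
  have hcard : 0 < √(#S : ℝ) * √(#T : ℝ) := by
    apply mul_pos <;> simpa using card_pos.mpr ‹_›
  refine le_of_mul_le_mul_right ?_ hcard
  calc √(a * b) * (√(#S : ℝ) * √(#T : ℝ)) = √((#S * a) * (#T * b)) := by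
        rw [← Real.sqrt_mul (by positivity), ← Real.sqrt_mul (by positivity)]
        ring_nf
    _ ≤ √(L * L) := Real.sqrt_le_sqrt (mul_le_mul hSL hTL (by positivity) hL)
    _ = L := Real.sqrt_mul_self hL
    _ ≤ specNorm A * (√(#S : ℝ) * √(#T : ℝ)) := by
        rw [← mul_assoc]; exact sum_sum_le_specNorm_mul_sqrt_card A S T

end SpectralNorm

section SymmAdjMatrix

variable {α : Type*} (E : α → α → Prop) [DecidableRel E]

def symmAdjMatrix (s : Finset α) : Matrix s s ℝ :=
  of fun a b => if E a b ∨ E b a then 1 else 0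

lemma symmAdjMatrix_nonneg (s : Finset α) (a b : s) : 0 ≤ symmAdjMatrix E s a b := by
  rw [symmAdjMatrix, of_apply]; positivity

lemma isSymm_symmAdjMatrix (s : Finset α) : (symmAdjMatrix E s).IsSymm :=
  IsSymm.ext fun a b => by simp [symmAdjMatrix, or_comm]

lemma sum_symmAdjMatrix_apply (s : Finset α) (a : s) :
    ∑ b, symmAdjMatrix E s a b = #{b ∈ s | E a b ∨ E b a} := by
  simp only [symmAdjMatrix, of_apply]
  rw [sum_coe_sort s (fun b => if E a b ∨ E b a then (1 : ℝ) else 0), sum_boole]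

lemma sum_subtype_symmAdjMatrix_apply [DecidableEq α] (s Z : Finset α) (hZ : Z ⊆ s) (a : s) :
    ∑ b ∈ Z.subtype (· ∈ s), symmAdjMatrix E s a b = #{b ∈ Z | E a b ∨ E b a} := by
  simp only [symmAdjMatrix, of_apply]
  rw [sum_subtype_of_mem (fun b => if E a b ∨ E b a then (1 : ℝ) else 0) hZ, sum_boole]

lemma of_ite_symmAdjMatrix (s : Finset α) (P : α → α → Prop) [DecidableRel P]
    (hP : ∀ a b, P a b → P b a) :
    of (fun a b : s => if P a b then symmAdjMatrix E s a b else 0) =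
      symmAdjMatrix (fun a b => E a b ∧ P a b) s := by
  ext a b
  by_cases hab : P a b
  · simp [symmAdjMatrix, hab, hP _ _ hab]
  · have hba : ¬ P b a := fun h => hab (hP _ _ h)
    simp [symmAdjMatrix, hab, hba]

end SymmAdjMatrix

section Bipartite

variable {α : Type*} [DecidableEq α] {E : α → α → Prop} [DecidableRel E] {X Y : Finset α}

lemma sqrt_mul_le_specNorm_symmAdjMatrix (hX : X.Nonempty) (hY : Y.Nonempty) {h h' : ℕ}
    (hrow : ∀ a ∈ X, h ≤ #{b ∈ Y | E a b}) (hcol : ∀ b ∈ Y, h' ≤ #{a ∈ X | E a b}) :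
    √(h * h' : ℝ) ≤ specNorm (symmAdjMatrix E (X ∪ Y)) := by
  refine sqrt_mul_le_specNorm _ (S := X.subtype (· ∈ X ∪ Y)) (T := Y.subtype (· ∈ X ∪ Y))
    ?_ ?_ (Nat.cast_nonneg h) (Nat.cast_nonneg h') (fun a ha => ?_) (fun b hb => ?_)
  · obtain ⟨a, ha⟩ := hX
    exact ⟨⟨a, mem_union_left _ ha⟩, mem_subtype.mpr ha⟩
  · obtain ⟨b, hb⟩ := hY
    exact ⟨⟨b, mem_union_right _ hb⟩, mem_subtype.mpr hb⟩
  · rw [sum_subtype_symmAdjMatrix_apply E _ _ subset_union_right]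
    exact_mod_cast (hrow a (mem_subtype.mp ha)).trans
      (card_le_card (monotone_filter_right _ fun _ _ => Or.inl))
  · simp_rw [(isSymm_symmAdjMatrix E _).apply b]
    rw [sum_subtype_symmAdjMatrix_apply E _ _ subset_union_left]
    exact_mod_cast (hcol b (mem_subtype.mp hb)).trans
      (card_le_card (monotone_filter_right _ fun _ _ => Or.inr))

variable (hXY : Disjoint X Y) (hE : ∀ a b, E a b → a ∈ X ∧ b ∈ Y)
include hXY hE

lemma filter_symm_subset_of_mem_left {a : α} (ha : a ∈ X) :
    {b ∈ X ∪ Y | E a b ∨ E b a} ⊆ {b ∈ Y | E a b} := by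
  intro b hb
  obtain ⟨-, hab | hba⟩ := mem_filter.mp hb
  · exact mem_filter.mpr ⟨(hE _ _ hab).2, hab⟩
  · exact absurd (hE _ _ hba).2 (disjoint_left.mp hXY ha)

lemma filter_symm_subset_of_mem_right {b : α} (hb : b ∈ Y) :
    {a ∈ X ∪ Y | E b a ∨ E a b} ⊆ {a ∈ X | E a b} := by
  intro a ha
  obtain ⟨-, hba | hab⟩ := mem_filter.mp ha
  · exact absurd (hE _ _ hba).1 (disjoint_right.mp hXY hb)
  · exact mem_filter.mpr ⟨(hE _ _ hab).1, hab⟩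

lemma specNorm_symmAdjMatrix_le {ℓ ℓ' : ℕ}
    (hrow : ∀ a ∈ X, #{b ∈ Y | E a b} ≤ ℓ) (hcol : ∀ b ∈ Y, #{a ∈ X | E a b} ≤ ℓ') :
    specNorm (symmAdjMatrix E (X ∪ Y)) ≤ √(ℓ * ℓ' : ℝ) := by
  refine specNorm_le_sqrt_mul_of_bipartite _ (symmAdjMatrix_nonneg E _)
    (isSymm_symmAdjMatrix E _) (fun a => (a : α) ∈ X) (fun a b hab => ?_)
    (Nat.cast_nonneg ℓ) (Nat.cast_nonneg ℓ') fun a => ?_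
  · have hE' : E a b ∨ E b a := by
      by_contra hn; exact hab (by simp [symmAdjMatrix, hn])
    rcases hE' with h | h <;> simp [(hE _ _ h).1, disjoint_right.mp hXY (hE _ _ h).2]
  · rw [sum_symmAdjMatrix_apply]
    by_cases ha : (a : α) ∈ X
    · rw [if_pos ha]
      exact_mod_cast (card_le_card (filter_symm_subset_of_mem_left hXY hE ha)).trans (hrow _ ha)
    · have ha' : (a : α) ∈ Y := (mem_union.mp a.2).resolve_left ha
      rw [if_neg ha]
      exact_mod_cast (card_le_card (filter_symm_subset_of_mem_right hXY hE ha')).trans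
        (hcol _ ha')

end Bipartite

theorem spectral_adversary_ratio_bound_general
    {N p : ℕ} (hp : 1 ≤ p)
    (X Y : Finset (Fin N → Bool)) (hXY : Disjoint X Y)
    (hX : X.Nonempty) (hY : Y.Nonempty)
    (R : Finset ((Fin N → Bool) × (Fin N → Bool)))
    (hR : ∀ r ∈ R, r.1 ∈ X ∧ r.2 ∈ Y)
    (h h' ℓ ℓ' : ℕ) (hh : 1 ≤ h)
    (hrow : ∀ a ∈ X, h ≤ (Y.filter fun b => (a, b) ∈ R).card)
    (hcol : ∀ b ∈ Y, h' ≤ (X.filter fun a => (a, b) ∈ R).card)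
    (hrow' : ∀ i : Fin p → Fin N, ∀ a ∈ X,
      (Y.filter fun b => (a, b) ∈ R ∧ ∃ j, a (i j) ≠ b (i j)).card ≤ ℓ)
    (hcol' : ∀ i : Fin p → Fin N, ∀ b ∈ Y,
      (X.filter fun a => (a, b) ∈ R ∧ ∃ j, a (i j) ≠ b (i j)).card ≤ ℓ')
    (Γ : Matrix ↥(X ∪ Y) ↥(X ∪ Y) ℝ)
    (hΓ : ∀ a b : ↥(X ∪ Y),
      Γ a b = if ((a : Fin N → Bool), (b : Fin N → Bool)) ∈ R ∨
                 ((b : Fin N → Bool), (a : Fin N → Bool)) ∈ R then 1 else 0) :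
    Real.sqrt ((h * h' : ℝ) / (ℓ * ℓ')) ≤
      specNorm Γ /
        ⨆ i : Fin p → Fin N,
          specNorm (Matrix.of fun a b : ↥(X ∪ Y) =>
            if ∃ j, (a : Fin N → Bool) (i j) ≠ (b : Fin N → Bool) (i j) then Γ a b else 0) := by
  obtain rfl : Γ = symmAdjMatrix (fun a b => (a, b) ∈ R) (X ∪ Y) := Matrix.ext hΓ
  have hΓi (i : Fin p → Fin N) := of_ite_symmAdjMatrix (fun a b => (a, b) ∈ R) (X ∪ Y)
    (fun a b => ∃ j, a (i j) ≠ b (i j)) fun a b ⟨j, hj⟩ => ⟨j, hj.symm⟩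
  simp only [hΓi]
  obtain ⟨x, hx⟩ := hX
  obtain ⟨y, hyR⟩ := card_pos.mp (hh.trans (hrow x hx))
  obtain ⟨hy, hxy⟩ := mem_filter.mp hyR
  obtain ⟨k, hk⟩ : ∃ k, x k ≠ y k :=
    Function.ne_iff.mp fun hxy => disjoint_left.mp hXY hx (hxy ▸ hy)
  have : Nonempty (Fin p → Fin N) := ⟨fun _ => k⟩
  rw [Real.sqrt_div' _ (by positivity)]
  refine div_le_div₀ (norm_nonneg _) (sqrt_mul_le_specNorm_symmAdjMatrix ⟨x, hx⟩ hY hrow hcol) ?_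
    (ciSup_le fun i =>
      specNorm_symmAdjMatrix_le hXY (fun a b hab => hR _ hab.1) (hrow' i) (hcol' i))
  set E : (Fin p → Fin N) → (Fin N → Bool) → (Fin N → Bool) → Prop :=
    fun i a b => (a, b) ∈ R ∧ ∃ j, a (i j) ≠ b (i j)
  calc (0 : ℝ) < 1 := one_pos
    _ = symmAdjMatrix (E fun _ => k) (X ∪ Y)
          ⟨x, mem_union_left _ hx⟩ ⟨y, mem_union_right _ hy⟩ := by
        rw [symmAdjMatrix, of_apply, if_pos (Or.inl ⟨hxy, ⟨0, hp⟩, hk⟩)]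
    _ ≤ specNorm (symmAdjMatrix (E fun _ => k) (X ∪ Y)) := apply_le_specNorm _ _ _
    _ ≤ ⨆ i, specNorm (symmAdjMatrix (E i) (X ∪ Y)) :=
        le_ciSup (f := fun i => specNorm (symmAdjMatrix (E i) (X ∪ Y)))
          (Set.finite_range _).bddAbove fun _ => k

/-- **Spectral core of the combinatorial parallel adversary bound.**
For the 0-1 adversary matrix `Γ` of a relation `R ⊆ X × Y` with minimum degrees `h, h'`
and maximum degrees `ℓ, ℓ'` of the zeroed-out relations `R^{i₁⋯i_p}`, the spectral ratio
`λ(Γ) / max_{i₁,…,i_p} λ(Γ^{i₁⋯i_p})` is at least `√(h·h'/(ℓ·ℓ'))`. -/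
theorem spectral_adversary_ratio_bound
    {N p : ℕ} (hp : 1 ≤ p)
    (X Y : Finset (Fin N → Bool)) (hXY : Disjoint X Y)
    (hX : X.Nonempty) (hY : Y.Nonempty)
    (R : Finset ((Fin N → Bool) × (Fin N → Bool)))
    (hR : ∀ r ∈ R, r.1 ∈ X ∧ r.2 ∈ Y)
    (h h' ℓ ℓ' : ℕ) (hh : 1 ≤ h) (hh' : 1 ≤ h') (hℓ : 1 ≤ ℓ) (hℓ' : 1 ≤ ℓ')
    (hrow : ∀ a ∈ X, h ≤ (Y.filter fun b => (a, b) ∈ R).card)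
    (hcol : ∀ b ∈ Y, h' ≤ (X.filter fun a => (a, b) ∈ R).card)
    (hrow' : ∀ i : Fin p → Fin N, ∀ a ∈ X,
      (Y.filter fun b => (a, b) ∈ R ∧ ∃ j, a (i j) ≠ b (i j)).card ≤ ℓ)
    (hcol' : ∀ i : Fin p → Fin N, ∀ b ∈ Y,
      (X.filter fun a => (a, b) ∈ R ∧ ∃ j, a (i j) ≠ b (i j)).card ≤ ℓ')
    (Γ : Matrix ↥(X ∪ Y) ↥(X ∪ Y) ℝ)
    (hΓ : ∀ a b : ↥(X ∪ Y),
      Γ a b = if ((a : Fin N → Bool), (b : Fin N → Bool)) ∈ R ∨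
                 ((b : Fin N → Bool), (a : Fin N → Bool)) ∈ R then 1 else 0) :
    Real.sqrt ((h * h' : ℝ) / (ℓ * ℓ')) ≤
      specNorm Γ /
        ⨆ i : Fin p → Fin N,
          specNorm (Matrix.of fun a b : ↥(X ∪ Y) =>
            if ∃ j, (a : Fin N → Bool) (i j) ≠ (b : Fin N → Bool) (i j) then Γ a b else 0) :=
  spectral_adversary_ratio_bound_general hp X Y hXY hX hY R hR h h' ℓ ℓ' hh hrow hcol hrow' hcol' Γ
    hΓ
end

section
/- Let S be a finite set, Γ a real symmetric S × S matrix with nonnegative entries, δ : S → ℝ a unit vector with nonnegative entries satisfying Γ δ = λ(Γ) δ, and for each x ∈ S let ψ_x be a unit vector in a complex inner product space. If |⟨ψ_x, ψ_y⟩| ≤ c for every pair (x, y) with Γ_{xy} ≠ 0, then |Σ_{x,y ∈ S} Γ_{xy} δ_x δ_y ⟨ψ_x, ψ_y⟩| ≤ c · λ(Γ). In particular, if a quantum algorithm makes all pairs of final states with Γ_{xy} ≠ 0 nearly orthogonal, the final progress measure W^T satisfies |W^T| ≤ c · W⁰ = c · λ(Γ). -/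
/-! Bounding each term by its weight times `c` turns the progress measure into `c` times the
quadratic form `δᵀ Γ δ`, and at a unit eigenvector for `λ(Γ)` that form equals `λ(Γ)`. -/

open scoped Matrix

theorem norm_sum_ofReal_mul_le {ι 𝕜 : Type*} [RCLike 𝕜] (s : Finset ι) (w : ι → ℝ)
    (hw : ∀ i ∈ s, 0 ≤ w i) (z : ι → 𝕜) (c : ℝ) (hz : ∀ i ∈ s, w i ≠ 0 → ‖z i‖ ≤ c) :
    ‖∑ i ∈ s, (w i : 𝕜) * z i‖ ≤ c * ∑ i ∈ s, w i := by
  rw [Finset.mul_sum]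
  refine (norm_sum_le _ _).trans (Finset.sum_le_sum fun i hi => ?_)
  rw [norm_mul, RCLike.norm_ofReal, abs_of_nonneg (hw i hi), mul_comm c]
  rcases eq_or_ne (w i) 0 with h | h
  · simp [h]
  · exact mul_le_mul_of_nonneg_left (hz i hi h) (hw i hi)

theorem Matrix.sum_sum_mul_mul_of_mulVec_eq_smul {n : Type*} [Fintype n] (A : Matrix n n ℝ)
    (v : n → ℝ) (μ : ℝ) (hv : A *ᵥ v = μ • v) :
    ∑ a, ∑ b, A a b * v a * v b = μ * ∑ a, v a ^ 2 := by
  have hrow : ∀ a, ∑ b, A a b * v b = μ * v a := fun a => by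
    simpa [Matrix.mulVec, dotProduct] using congrFun hv a
  rw [Finset.mul_sum]
  refine Finset.sum_congr rfl fun a _ => ?_
  calc ∑ b, A a b * v a * v b = v a * ∑ b, A a b * v b := by
        rw [Finset.mul_sum]; exact Finset.sum_congr rfl fun b _ => by ring
    _ = μ * v a ^ 2 := by rw [hrow a]; ring

theorem final_progress_measure_bound_general
    {S : Type*} [Fintype S] [DecidableEq S]
    {E : Type*} [NormedAddCommGroup E] [InnerProductSpace ℂ E]
    (Γ : Matrix S S ℝ) (hnn : ∀ a b, 0 ≤ Γ a b)
    (δ : S → ℝ) (hδnn : ∀ a, 0 ≤ δ a) (hδ : ∑ a, δ a ^ 2 = 1)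
    (heig : Γ.mulVec δ = specNorm Γ • δ)
    (ψ : S → E)
    (c : ℝ)
    (hc : ∀ a b, Γ a b ≠ 0 → ‖(inner ℂ (ψ a) (ψ b) : ℂ)‖ ≤ c) :
    ‖∑ a : S, ∑ b : S, ((Γ a b * δ a * δ b : ℝ) : ℂ) * inner ℂ (ψ a) (ψ b)‖ ≤
      c * specNorm Γ := by
  have hbound := norm_sum_ofReal_mul_le (𝕜 := ℂ) Finset.univ
    (fun p : S × S => Γ p.1 p.2 * δ p.1 * δ p.2)
    (fun p _ => mul_nonneg (mul_nonneg (hnn _ _) (hδnn _)) (hδnn _))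
    (fun p => inner ℂ (ψ p.1) (ψ p.2)) c
    (fun p _ hp => hc _ _ (left_ne_zero_of_mul (left_ne_zero_of_mul hp)))
  simp only [← Finset.univ_product_univ, Finset.sum_product] at hbound
  rwa [Γ.sum_sum_mul_mul_of_mulVec_eq_smul δ _ heig, hδ, mul_one] at hbound

/-- If all pairs of unit vectors `ψ_x, ψ_y` with `Γ_{xy} ≠ 0` have overlap at most `c`,
then the adversary progress measure `Σ Γ_{xy} δ_x δ_y ⟨ψ_x, ψ_y⟩`, with `δ` a nonnegative
unit principal eigenvector of `Γ`, is at most `c · λ(Γ)` in absolute value. -/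
theorem final_progress_measure_bound
    {S : Type*} [Fintype S] [DecidableEq S]
    {E : Type*} [NormedAddCommGroup E] [InnerProductSpace ℂ E]
    (Γ : Matrix S S ℝ) (hsym : Γ.IsSymm) (hnn : ∀ a b, 0 ≤ Γ a b)
    (δ : S → ℝ) (hδnn : ∀ a, 0 ≤ δ a) (hδ : ∑ a, δ a ^ 2 = 1)
    (heig : Γ.mulVec δ = specNorm Γ • δ)
    (ψ : S → E) (hψ : ∀ a, ‖ψ a‖ = 1)
    (c : ℝ)
    (hc : ∀ a b, Γ a b ≠ 0 → ‖(inner ℂ (ψ a) (ψ b) : ℂ)‖ ≤ c) :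
    ‖∑ a : S, ∑ b : S, ((Γ a b * δ a * δ b : ℝ) : ℂ) * inner ℂ (ψ a) (ψ b)‖ ≤
      c * specNorm Γ :=
  final_progress_measure_bound_general Γ hnn δ hδnn hδ heig ψ c hc
end
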